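/- arXiv:2311.11460 — 6 statements merged into one kernel-verified Lean document; each statement's English description precedes it below -/
import Mathlib

section
/- For positive reals z, p1, p2 with p1 > z and p2 > z, one has z(p1+p2)/(z^2+p1*p2) ≤ p1*p2/(z*(p1+p2)-z^2). (Note z(p1+p2)-z^2 > 0 under these hypotheses.) -/
theorem stmt_0 (z p1 p2 : ℝ) (hz : 0 < z) (hp1 : 0 < p1) (hp2 : 0 < p2)
    (h1 : p1 > z) (h2 : p2 > z) :
    z * (p1 + p2) / (z ^ 2 + p1 * p2) ≤ p1 * p2 / (z * (p1 + p2) - z ^ 2) := by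
  have hd1 : 0 < z ^ 2 + p1 * p2 := by positivity
  have hd2 : 0 < z * (p1 + p2) - z ^ 2 := by nlinarith
  rw [div_le_div_iff₀ hd1 hd2]
  nlinarith [mul_pos (sub_pos.2 h1) (sub_pos.2 h2), sq_nonneg (p1 - p2),
    sq_nonneg (p1*p2 - z*(p1+p2) + z^2), mul_pos hz hp1, mul_pos hz hp2,
    mul_nonneg (mul_nonneg hz.le hz.le) (mul_nonneg (sub_pos.2 h1).le (sub_pos.2 h2).le),
    mul_nonneg (mul_pos hp1 hp2).le (mul_nonneg (sub_pos.2 h1).le (sub_pos.2 h2).le)]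
end

section
/- Let p1, p2, z > 0 with z < min{p1, p2}. Then the cubic polynomial M(k) = k^3 + c2*k^2 + c1*k + c0 with c2 = p1+p2-z, c1 = (z-p1-p2)*p1*p2/z, c0 = (z^2-p1^2-p2^2)*p1*p2/z has exactly one root in the open interval (p1+p2-z, p1*p2/z). -/
set_option maxHeartbeats 1000000 in
theorem stmt_7 (p1 p2 z : ℝ) (hp1 : 0 < p1) (hp2 : 0 < p2) (hz : 0 < z)
    (hzmin : z < min p1 p2) :
    ∃! k : ℝ, k ∈ Set.Ioo (p1 + p2 - z) (p1 * p2 / z) ∧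
      k ^ 3 + (p1 + p2 - z) * k ^ 2 + ((z - p1 - p2) * p1 * p2 / z) * k +
        (z ^ 2 - p1 ^ 2 - p2 ^ 2) * p1 * p2 / z = 0 := by
  obtain ⟨hz1, hz2⟩ := lt_min_iff.mp hzmin
  have hu : 0 < p1 - z := sub_pos.2 hz1
  have hv : 0 < p2 - z := sub_pos.2 hz2
  set a : ℝ := p1 + p2 - z with ha
  set f : ℝ → ℝ := fun k => k ^ 3 + a * k ^ 2 + ((z - p1 - p2) * p1 * p2 / z) * k +
        (z ^ 2 - p1 ^ 2 - p2 ^ 2) * p1 * p2 / z with hf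
  have hzne : z ≠ 0 := ne_of_gt hz
  have ha0 : 0 < a := by simp only [ha]; linarith
  have hab : a < p1 * p2 / z := by
    rw [lt_div_iff₀ hz]
    nlinarith [mul_pos hu hv]
  have hfa : f a < 0 := by
    have h1 : f a = (2 * z * a ^ 3 - (a ^ 2 + p1 ^ 2 + p2 ^ 2 - z ^ 2) * p1 * p2) / z := by
      simp only [hf, ha]; field_simp; ring
    rw [h1, div_neg_iff]
    right
    refine ⟨?_, hz⟩
    have h2 : 2 * z * a ^ 3 - (a ^ 2 + p1 ^ 2 + p2 ^ 2 - z ^ 2) * p1 * p2 =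
        -(2 * (p1 - z) * (p2 - z) * ((p1 - z) ^ 2 + (p1 - z) * (p2 - z) + (p2 - z) ^ 2
          + z * (p1 - z) + z * (p2 - z))) := by
      simp only [ha]; ring
    rw [h2, neg_lt_zero]
    positivity
  have hfb : 0 < f (p1 * p2 / z) := by
    have h1 : f (p1 * p2 / z) = (p1 ^ 2 - z ^ 2) * (p2 ^ 2 - z ^ 2) * p1 * p2 / z ^ 3 := by
      simp only [hf, ha]; field_simp; ring
    rw [h1]
    apply div_pos _ (by positivity)
    have h2 : 0 < p1 ^ 2 - z ^ 2 := by nlinarith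
    have h3 : 0 < p2 ^ 2 - z ^ 2 := by nlinarith
    positivity
  have hcont : ContinuousOn f (Set.Icc a (p1 * p2 / z)) := by
    apply Continuous.continuousOn
    simp only [hf]
    fun_prop
  have hsub := intermediate_value_Ioo (le_of_lt hab) hcont
  have h0 : (0 : ℝ) ∈ Set.Ioo (f a) (f (p1 * p2 / z)) := ⟨hfa, hfb⟩
  obtain ⟨k, hk, hfk⟩ := hsub h0
  have uniq : ∀ x y : ℝ, x ∈ Set.Ioo a (p1 * p2 / z) → y ∈ Set.Ioo a (p1 * p2 / z) →
      f x = 0 → f y = 0 → x = y := by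
    intro x y hx hy hfx hfy
    have key : (x - y) * f a = (x - y) * ((y - a) * ((x - a) * (2 * a + y + x))) := by
      have h1 : (x - y) * f a - (x - a) * f y + (y - a) * f x
          = (x - y) * ((y - a) * ((x - a) * (2 * a + y + x))) := by
        simp only [hf]; field_simp; ring
      rw [hfx, hfy] at h1
      linarith [h1]
    have hP : 0 < (y - a) * ((x - a) * (2 * a + y + x)) := by
      have h1 : 0 < y - a := sub_pos.2 hy.1
      have h2 : 0 < x - a := sub_pos.2 hx.1
      have h3 : 0 < 2 * a + y + x := by nlinarith
      positivity
    have hz0 : (x - y) * (f a - (y - a) * ((x - a) * (2 * a + y + x))) = 0 := by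
      linear_combination key
    rcases mul_eq_zero.mp hz0 with h | h
    · linarith [sub_eq_zero.mp h]
    · linarith
  refine ⟨k, ⟨hk, hfk⟩, ?_⟩
  intro y hy
  exact uniq y k hy.1 hk hy.2 hfk
end

section
/- Let p1, p2, z, k_p, ω > 0 satisfy z < min{p1,p2}, k_p > p1+p2-z, ω^2 < p1*p2, and ω^2 > k_p*z. Then ω^4 + (k_p*(p1+p2-z) + z*(p1+p2) - p1*p2)*ω^2 + k_p*z*p1*p2 > 0, and equivalently ((k_p+z)*ω/(ω^2-k_p*z)) * ((p1+p2)*ω/(p1*p2-ω^2)) > 1. -/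
theorem stmt_13 (p1 p2 z kp ω : ℝ) (hp1 : 0 < p1) (hp2 : 0 < p2) (hz : 0 < z)
    (hkp : 0 < kp) (hω : 0 < ω)
    (hzmin : z < min p1 p2) (hkp2 : p1 + p2 - z < kp)
    (hω1 : ω ^ 2 < p1 * p2) (hω2 : ω ^ 2 > kp * z) :
    0 < ω ^ 4 + (kp * (p1 + p2 - z) + z * (p1 + p2) - p1 * p2) * ω ^ 2 + kp * z * p1 * p2 ∧
    1 < ((kp + z) * ω / (ω ^ 2 - kp * z)) * ((p1 + p2) * ω / (p1 * p2 - ω ^ 2)) := by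
  have ha : 0 < ω ^ 2 - kp * z := by linarith
  have hb : 0 < p1 * p2 - ω ^ 2 := by linarith
  have hkey : (ω ^ 2 - kp * z) * (p1 * p2 - ω ^ 2) < (kp + z) * (p1 + p2) * ω ^ 2 := by
    have h1 : (ω ^ 2 - kp * z) * (p1 * p2 - ω ^ 2) < ω ^ 2 * (p1 * p2) := by
      nlinarith [mul_pos hkp hz]
    have h2 : ω ^ 2 * (p1 * p2) ≤ (p1 + p2) ^ 2 * ω ^ 2 := by
      nlinarith [sq_nonneg (p1 - p2), sq_nonneg ω]
    have h3 : (p1 + p2) ^ 2 * ω ^ 2 < (kp + z) * (p1 + p2) * ω ^ 2 := by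
      have : p1 + p2 < kp + z := by linarith
      have hpos : 0 < (p1 + p2) * ω ^ 2 := by positivity
      nlinarith
    linarith
  constructor
  · nlinarith [hkey]
  · rw [div_mul_div_comm]
    rw [lt_div_iff₀ (by positivity)]
    ring_nf
    nlinarith [hkey]
end

section
/- Let p1, p2, z > 0 with z < min{p1,p2}, ω^2 < p1*p2, ω^2 > k_p*z, k_p > p1+p2-z, k_p > 0, ω > 0. Then π - arctan((p1+p2)*ω/(p1*p2-ω^2)) - arctan((k_p+z)*ω/(ω^2-k_p*z)) ≤ π/2. -/
theorem stmt_14 (p1 p2 z kp ω : ℝ) (hp1 : 0 < p1) (hp2 : 0 < p2) (hz : 0 < z)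
    (hkp : 0 < kp) (hω : 0 < ω)
    (hzmin : z < min p1 p2) (hkp2 : p1 + p2 - z < kp)
    (hω1 : ω ^ 2 < p1 * p2) (hω2 : ω ^ 2 > kp * z) :
    Real.pi - Real.arctan ((p1 + p2) * ω / (p1 * p2 - ω ^ 2)) -
      Real.arctan ((kp + z) * ω / (ω ^ 2 - kp * z)) ≤ Real.pi / 2 := by
  have hz1 : z < p1 := lt_of_lt_of_le hzmin (min_le_left _ _)
  have hz2 : z < p2 := lt_of_lt_of_le hzmin (min_le_right _ _)
  have hD1 : 0 < p1 * p2 - ω ^ 2 := by linarith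
  have hD2 : 0 < ω ^ 2 - kp * z := by linarith
  have hN1 : 0 < (p1 + p2) * ω := by positivity
  set A := (p1 + p2) * ω / (p1 * p2 - ω ^ 2) with hA
  have hApos : 0 < A := div_pos hN1 hD1
  have hkey : A⁻¹ ≤ (kp + z) * ω / (ω ^ 2 - kp * z) := by
    have hP : 0 < p1 + p2 - z := by linarith
    have hbr : p1 * p2 + kp * z ≤ (p1 + p2) * (kp + z) := by
      nlinarith [mul_nonneg (sub_pos.mpr hkp2).le hP.le, sq_nonneg (p1 - z),
        sq_nonneg (p2 - z), mul_pos hz (sub_pos.mpr hz1), mul_pos hz (sub_pos.mpr hz2),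
        mul_pos hp1 hp2]
    rw [hA, inv_div, div_le_div_iff₀ hN1 hD2]
    nlinarith [mul_le_mul_of_nonneg_left hbr (sq_nonneg ω),
      mul_pos (mul_pos hp1 hp2) (mul_pos hkp hz), sq_nonneg (ω ^ 2)]
  have := Real.arctan_strictMono.monotone hkey
  rw [Real.arctan_inv_of_pos hApos] at this
  have harc := Real.arctan_lt_pi_div_two ((kp + z) * ω / (ω ^ 2 - kp * z))
  linarith
end

section
/- Let p1, p2, z > 0 with p1 > z, p2 > z, and p1+p2 < p1*p2/z. Then the quadratic q(x) = (p1+p2-z)*x^2 + ((p1+p2)*(z^2+p1*p2)-z*(p1^2+p2^2))*x + p1*p2*z*(z*(p1+p2)-p1*p2) has positive leading coefficient, positive middle coefficient, and negative constant term, and hence exactly one positive real root. -/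
lemma quad_unique_pos_root (a b c : ℝ) (ha : 0 < a) (hb : 0 < b) (hc : c < 0) :
    ∃! x : ℝ, 0 < x ∧ a * x ^ 2 + b * x + c = 0 := by
  have hD : 0 < b ^ 2 - 4 * a * c := by nlinarith
  set s := Real.sqrt (b ^ 2 - 4 * a * c) with hs_def
  have hs2 : s ^ 2 = b ^ 2 - 4 * a * c := Real.sq_sqrt hD.le
  have hsb : b < s := by
    nlinarith [Real.sqrt_nonneg (b ^ 2 - 4 * a * c)]
  have hx0 : 0 < (-b + s) / (2 * a) := div_pos (by linarith) (by linarith)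
  have hroot0 : a * ((-b + s) / (2 * a)) ^ 2 + b * ((-b + s) / (2 * a)) + c = 0 := by
    field_simp
    nlinarith [hs2]
  refine ⟨(-b + s) / (2 * a), ⟨hx0, hroot0⟩, ?_⟩
  rintro y ⟨hy, hroot⟩
  have key : (y - (-b + s) / (2 * a)) * (a * (y + (-b + s) / (2 * a)) + b) = 0 := by
    linear_combination hroot - hroot0
  rcases mul_eq_zero.1 key with h1 | h1
  · linarith
  · nlinarith [mul_pos ha hy, mul_pos ha hx0]

theorem stmt_16 (p1 p2 z : ℝ) (hp1 : 0 < p1) (hp2 : 0 < p2) (hz : 0 < z)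
    (h : p1 + p2 < p1 * p2 / z) :
    0 < p1 + p2 - z ∧
    0 < (p1 + p2) * (z ^ 2 + p1 * p2) - z * (p1 ^ 2 + p2 ^ 2) ∧
    p1 * p2 * z * (z * (p1 + p2) - p1 * p2) < 0 ∧
    ∃! x : ℝ, 0 < x ∧
      (p1 + p2 - z) * x ^ 2 + ((p1 + p2) * (z ^ 2 + p1 * p2) - z * (p1 ^ 2 + p2 ^ 2)) * x +
        p1 * p2 * z * (z * (p1 + p2) - p1 * p2) = 0 := by
  have h' : z * (p1 + p2) < p1 * p2 := by
    have := (lt_div_iff₀ hz).1 h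
    nlinarith
  have hzp1 : z < p1 := by nlinarith
  have hzp2 : z < p2 := by nlinarith
  have ha : 0 < p1 + p2 - z := by linarith
  have hb : 0 < (p1 + p2) * (z ^ 2 + p1 * p2) - z * (p1 ^ 2 + p2 ^ 2) := by
    have h1 : 0 < p1 * (z * (z - p1) + p1 * p2) :=
      mul_pos hp1 (by nlinarith [mul_pos hz hz, mul_pos hz hp2])
    have h2 : 0 < p2 * (z * (z - p2) + p1 * p2) :=
      mul_pos hp2 (by nlinarith [mul_pos hz hz, mul_pos hz hp1])
    nlinarith
  have hc : p1 * p2 * z * (z * (p1 + p2) - p1 * p2) < 0 := by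
    have := mul_pos (mul_pos hp1 hp2) hz
    nlinarith
  exact ⟨ha, hb, hc, quad_unique_pos_root _ _ _ ha hb hc⟩
end

section
/- Let p1, p2, z > 0 with p1+p2 < k_p < p1*p2/z. Then the quartic ω^4 + (p1^2+p2^2-k_p^2)*ω^2 + (p1^2*p2^2 - z^2*k_p^2) has two positive roots ω1 > ω2 > 0, satisfying ω1^2 > p1*p2 + z*(p1+p2) and ω2^2 < p1*p2 - z*(p1+p2). -/
theorem stmt_17 (p1 p2 z kp : ℝ) (hp1 : 0 < p1) (hp2 : 0 < p2) (hz : 0 < z)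
    (hk1 : p1 + p2 < kp) (hk2 : kp < p1 * p2 / z) :
    ∃ ω1 ω2 : ℝ, 0 < ω2 ∧ ω2 < ω1 ∧
      ω1 ^ 4 + (p1 ^ 2 + p2 ^ 2 - kp ^ 2) * ω1 ^ 2 + (p1 ^ 2 * p2 ^ 2 - z ^ 2 * kp ^ 2) = 0 ∧
      ω2 ^ 4 + (p1 ^ 2 + p2 ^ 2 - kp ^ 2) * ω2 ^ 2 + (p1 ^ 2 * p2 ^ 2 - z ^ 2 * kp ^ 2) = 0 ∧
      ω1 ^ 2 > p1 * p2 + z * (p1 + p2) ∧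
      ω2 ^ 2 < p1 * p2 - z * (p1 + p2) := by
  have hkp : 0 < kp := lt_trans (by linarith) hk1
  have hzk : kp * z < p1 * p2 := (lt_div_iff₀ hz).mp hk2
  set b : ℝ := p1 ^ 2 + p2 ^ 2 - kp ^ 2 with hb
  set c : ℝ := p1 ^ 2 * p2 ^ 2 - z ^ 2 * kp ^ 2 with hc
  have hcpos : 0 < c := by
    have h1 : 0 < p1 * p2 - kp * z := by linarith
    have h2 : 0 < p1 * p2 + kp * z := by positivity
    have := mul_pos h1 h2
    rw [hc]; nlinarith
  have hbneg : b < 0 := by rw [hb]; nlinarith [mul_pos hp1 hp2]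
  have hzp1 : z < p1 := by nlinarith [mul_pos hp1 hp2]
  have hzp2 : z < p2 := by nlinarith [mul_pos hp1 hp2]
  set m : ℝ := p1 * p2 + z * (p1 + p2) with hm
  set m' : ℝ := p1 * p2 - z * (p1 + p2) with hm'
  have hksq : (p1 + p2) ^ 2 - kp ^ 2 < 0 := by nlinarith
  have hqm : m ^ 2 + b * m + c < 0 := by
    have key : m ^ 2 + b * m + c = (p1 + z) * (p2 + z) * ((p1 + p2) ^ 2 - kp ^ 2) := by
      rw [hm, hb, hc]; ring
    rw [key]
    exact mul_neg_of_pos_of_neg (mul_pos (by linarith) (by linarith)) hksq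
  have hqm' : m' ^ 2 + b * m' + c < 0 := by
    have key : m' ^ 2 + b * m' + c = (p1 - z) * (p2 - z) * ((p1 + p2) ^ 2 - kp ^ 2) := by
      rw [hm', hb, hc]; ring
    rw [key]
    exact mul_neg_of_pos_of_neg (mul_pos (by linarith) (by linarith)) hksq
  have hD : 0 < b ^ 2 - 4 * c := by nlinarith [sq_nonneg (b + 2 * m)]
  set s : ℝ := Real.sqrt (b ^ 2 - 4 * c) with hs
  have hs2 : s ^ 2 = b ^ 2 - 4 * c := Real.sq_sqrt hD.le
  have hspos : 0 < s := Real.sqrt_pos.mpr hD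
  set x1 : ℝ := (-b + s) / 2 with hx1
  set x2 : ℝ := (-b - s) / 2 with hx2
  have hx2pos : 0 < x2 := by
    rw [hx2]
    have hsb : s < -b := by
      have h1 : s ^ 2 < (-b) ^ 2 := by rw [hs2]; nlinarith
      exact lt_of_pow_lt_pow_left₀ 2 (by linarith) h1
    linarith
  have hx1x2 : x2 < x1 := by rw [hx1, hx2]; linarith
  have hr1 : x1 ^ 2 + b * x1 + c = 0 := by rw [hx1]; linear_combination hs2 / 4
  have hr2 : x2 ^ 2 + b * x2 + c = 0 := by rw [hx2]; linear_combination hs2 / 4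
  have hx1m : m < x1 := by
    have h1 : (2 * m + b) ^ 2 < s ^ 2 := by
      have he : (2 * m + b) ^ 2 = 4 * (m ^ 2 + b * m + c) + (b ^ 2 - 4 * c) := by ring
      rw [he, hs2]; linarith
    have h2 := lt_of_pow_lt_pow_left₀ 2 hspos.le h1
    rw [hx1]; linarith
  have hx2m' : x2 < m' := by
    have h1 : (-(2 * m' + b)) ^ 2 < s ^ 2 := by
      have he : (-(2 * m' + b)) ^ 2 = 4 * (m' ^ 2 + b * m' + c) + (b ^ 2 - 4 * c) := by ring
      rw [he, hs2]; linarith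
    have h2 := lt_of_pow_lt_pow_left₀ 2 hspos.le h1
    rw [hx2]; linarith
  have hx1pos : 0 < x1 := lt_trans hx2pos hx1x2
  have hsq1 : Real.sqrt x1 ^ 2 = x1 := Real.sq_sqrt hx1pos.le
  have hsq2 : Real.sqrt x2 ^ 2 = x2 := Real.sq_sqrt hx2pos.le
  have hq1 : Real.sqrt x1 ^ 4 = x1 ^ 2 := by
    rw [show (4 : ℕ) = 2 * 2 from rfl, pow_mul, hsq1]
  have hq2 : Real.sqrt x2 ^ 4 = x2 ^ 2 := by
    rw [show (4 : ℕ) = 2 * 2 from rfl, pow_mul, hsq2]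
  exact ⟨Real.sqrt x1, Real.sqrt x2, Real.sqrt_pos.mpr hx2pos,
    Real.sqrt_lt_sqrt hx2pos.le hx1x2,
    by rw [hq1, hsq1]; exact hr1,
    by rw [hq2, hsq2]; exact hr2,
    by rw [hsq1]; exact hx1m,
    by rw [hsq2]; exact hx2m'⟩
end
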